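/- arXiv:2405.07958 — 5 statements merged into one kernel-verified Lean document; each statement's English description precedes it below -/
import Mathlib

section
/- For real numbers λ > 0, μ > 0, ν ∈ ℝ, and real β with |β| < 1, one has ∫₀¹ x^{λ−1} (1−x)^{μ−1} (1−βx)^{−ν} dx = B(λ,μ) · ∑_{i=0}^∞ ((ν)_i (λ)_i / (λ+μ)_i) · β^i / i!, where the series on the right converges. -/
/-!
Expand `(1 - b x)^(-ν) = ∑ (ν)_n (b x)^n / n!` by the binomial series and integrate term by term
against `x^(λ-1) (1-x)^(μ-1)`. The `n`-th term contributes `(ν)_n b^n / n! · B(λ+n, μ)`, and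
`B(λ+n, μ) = (λ)_n / (λ+μ)_n · B(λ, μ)` by `B = ΓΓ/Γ` and `Γ(z+n) = (z)_n Γ(z)`. The interchange
is legitimate because the integrals of the absolute values of the terms are `B(λ,μ)` times the
absolute values of the hypergeometric terms, and `|(ν)_n| (λ)_n / (λ+μ)_n ≤ (|ν|)_n` makes these
summable, being dominated by the binomial series of `(1 - |b|)^(-|ν|)`.
-/

open Polynomial Set MeasureTheory

lemma Ring.choose_add_sub_one_eq_ascPochhammer_div {K : Type*} [Field K] [CharZero K]
    (a : K) (n : ℕ) :
    Ring.choose (a + n - 1) n = (ascPochhammer K n).eval a / n.factorial := by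
  rw [Ring.choose_eq_smul, Polynomial.descPochhammer_smeval_eq_ascPochhammer,
    ascPochhammer_smeval_cast, ascPochhammer_smeval_eq_eval]
  simp only [smul_eq_mul]
  ring_nf

lemma hasSum_ascPochhammer_div_factorial_mul_pow (v : ℝ) {y : ℝ} (hy : |y| < 1) :
    HasSum (fun n => (ascPochhammer ℝ n).eval v / n.factorial * y ^ n) ((1 - y) ^ (-v)) := by
  have h := (Real.one_div_one_sub_rpow_hasFPowerSeriesOnBall_zero v).hasSum
    (y := y) (by simpa [enorm_eq_nnnorm, ← NNReal.coe_lt_coe] using hy)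
  simpa [FormalMultilinearSeries.ofScalars_apply_eq, Ring.choose_add_sub_one_eq_ascPochhammer_div,
    Real.rpow_neg (show 0 ≤ 1 - y by linarith [le_abs_self y]), mul_comm] using h

section Pochhammer

variable {S : Type*} [Semiring S] [PartialOrder S] [IsStrictOrderedRing S]

lemma ascPochhammer_eval_le_of_le {s t : S} (hs : 0 < s) (hst : s ≤ t) (n : ℕ) :
    (ascPochhammer S n).eval s ≤ (ascPochhammer S n).eval t := by
  induction n with
  | zero => simp
  | succ n ih =>
    rw [ascPochhammer_succ_eval, ascPochhammer_succ_eval]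
    exact mul_le_mul ih (add_le_add_left hst _) (by positivity)
      ((ascPochhammer_pos n s hs).le.trans ih)

end Pochhammer

lemma abs_ascPochhammer_eval_le (x : ℝ) (n : ℕ) :
    |(ascPochhammer ℝ n).eval x| ≤ (ascPochhammer ℝ n).eval |x| := by
  induction n with
  | zero => simp
  | succ n ih =>
    rw [ascPochhammer_succ_eval, ascPochhammer_succ_eval, abs_mul]
    have hx : |x + n| ≤ |x| + n := (abs_add_le x n).trans_eq (by simp)
    exact mul_le_mul ih hx (abs_nonneg _) ((abs_nonneg _).trans ih)

namespace Real

noncomputable def betaIntegral (a b : ℝ) : ℝ := ∫ x in (0:ℝ)..1, x ^ (a - 1) * (1 - x) ^ (b - 1)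

lemma ofReal_betaIntegrand {a b x : ℝ} (hx : x ∈ Icc (0:ℝ) 1) :
    ((x ^ (a - 1) * (1 - x) ^ (b - 1) : ℝ) : ℂ) =
      (x : ℂ) ^ (a - 1 : ℂ) * (1 - x : ℂ) ^ (b - 1 : ℂ) := by
  push_cast [Complex.ofReal_cpow hx.1, Complex.ofReal_cpow (sub_nonneg.2 hx.2)]
  rfl

lemma ofReal_betaIntegral (a b : ℝ) : (betaIntegral a b : ℂ) = Complex.betaIntegral a b := by
  rw [betaIntegral, ← intervalIntegral.integral_ofReal]
  refine intervalIntegral.integral_congr fun x hx => ?_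
  exact ofReal_betaIntegrand (by rwa [uIcc_of_le zero_le_one] at hx)

lemma intervalIntegrable_betaIntegrand {a b : ℝ} (ha : 0 < a) (hb : 0 < b) :
    IntervalIntegrable (fun x => x ^ (a - 1) * (1 - x) ^ (b - 1)) volume 0 1 := by
  refine (Complex.betaIntegral_convergent (u := a) (v := b) (by simpa) (by simpa)).norm.congr
    fun x hx => ?_
  rw [uIoc_of_le zero_le_one] at hx
  have hx' : x ∈ Icc (0:ℝ) 1 := Ioc_subset_Icc_self hx
  rw [← ofReal_betaIntegrand hx', Complex.norm_real, norm_of_nonneg]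
  exact mul_nonneg (rpow_nonneg hx'.1 _) (rpow_nonneg (sub_nonneg.2 hx'.2) _)

lemma ofReal_ascPochhammer_eval (n : ℕ) (a : ℝ) :
    (((ascPochhammer ℝ n).eval a : ℝ) : ℂ) = (ascPochhammer ℂ n).eval (a : ℂ) := by
  rw [← ascPochhammer_map (algebraMap ℝ ℂ), eval_map]
  exact (eval₂_at_apply (algebraMap ℝ ℂ) a).symm

lemma betaIntegral_nat_add {a b : ℝ} (ha : 0 < a) (hb : 0 < b) (n : ℕ) :
    betaIntegral (a + n) b =
      (ascPochhammer ℝ n).eval a / (ascPochhammer ℝ n).eval (a + b) * betaIntegral a b := by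
  have hGamma : ∀ {z : ℝ}, 0 < z →
      Complex.Gamma (z + n : ℝ) = (ascPochhammer ℂ n).eval (z : ℂ) * Complex.Gamma z := fun hz => by
    rw [← Complex.Gamma_add_nat_div_Gamma_eq, div_mul_cancel₀, Complex.ofReal_add,
      Complex.ofReal_natCast]
    · exact Complex.Gamma_ne_zero_of_re_pos (by simpa)
    · intro k hk
      have := congrArg Complex.re hk
      simp only [Complex.ofReal_re, Complex.neg_re, Complex.natCast_re] at this
      linarith [k.cast_nonneg (α := ℝ)]
  have hab : 0 < a + b := add_pos ha hb
  apply Complex.ofReal_injective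
  rw [Complex.ofReal_mul, Complex.ofReal_div, ofReal_ascPochhammer_eval, ofReal_ascPochhammer_eval,
    ofReal_betaIntegral, ofReal_betaIntegral,
    Complex.betaIntegral_eq_Gamma_mul_div _ _ (by simp; positivity) (by simpa),
    Complex.betaIntegral_eq_Gamma_mul_div _ _ (by simpa) (by simpa), ← Complex.ofReal_add,
    ← Complex.ofReal_add, add_right_comm, hGamma ha, hGamma hab]
  have hΓ := Complex.Gamma_ne_zero_of_re_pos (s := (a + b : ℝ)) (by simpa)
  have hpoch : (ascPochhammer ℂ n).eval ((a + b : ℝ) : ℂ) ≠ 0 := by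
    rw [← ofReal_ascPochhammer_eval, Complex.ofReal_ne_zero]
    exact (ascPochhammer_pos n (a + b) hab).ne'
  field_simp

lemma betaIntegral_eq_integral_Ioc (a b : ℝ) :
    betaIntegral a b = ∫ x in Ioc (0:ℝ) 1, x ^ (a - 1) * (1 - x) ^ (b - 1) :=
  intervalIntegral.integral_of_le zero_le_one

lemma integral_norm_mul_betaIntegrand (c a b : ℝ) :
    ∫ x in Ioc (0:ℝ) 1, ‖c * (x ^ (a - 1) * (1 - x) ^ (b - 1))‖ = |c| * betaIntegral a b := by
  rw [betaIntegral_eq_integral_Ioc, ← integral_const_mul]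
  refine setIntegral_congr_fun measurableSet_Ioc fun x hx => ?_
  rw [norm_mul, norm_of_nonneg (mul_nonneg (rpow_nonneg hx.1.le _)
    (rpow_nonneg (sub_nonneg.2 hx.2) _)), norm_eq_abs]

end Real

open Real

noncomputable def hypergeometricTerm (a b c x : ℝ) (n : ℕ) : ℝ :=
  (ascPochhammer ℝ n).eval a * (ascPochhammer ℝ n).eval b / (ascPochhammer ℝ n).eval c *
    x ^ n / n.factorial

lemma hypergeometricTerm_eq_mul (a b c x : ℝ) (n : ℕ) :
    hypergeometricTerm a b c x n = (ascPochhammer ℝ n).eval a / n.factorial * x ^ n *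
      ((ascPochhammer ℝ n).eval b / (ascPochhammer ℝ n).eval c) := by
  simp only [hypergeometricTerm]; ring

lemma summable_norm_hypergeometricTerm (a : ℝ) {b c x : ℝ} (hb : 0 < b) (hbc : b ≤ c)
    (hx : |x| < 1) : Summable fun n => ‖hypergeometricTerm a b c x n‖ := by
  refine (hasSum_ascPochhammer_div_factorial_mul_pow |a| (y := |x|)
    (by rwa [abs_abs])).summable.of_nonneg_of_le (fun _ => norm_nonneg _) fun n => ?_
  set ratio := (ascPochhammer ℝ n).eval b / (ascPochhammer ℝ n).eval c
  have hpos := ascPochhammer_pos n b hb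
  have hle := ascPochhammer_eval_le_of_le hb hbc n
  have hratio : ratio ≤ 1 := div_le_one_of_le₀ hle (hpos.trans_le hle).le
  have hratio_nonneg : 0 ≤ ratio := div_nonneg hpos.le (hpos.trans_le hle).le
  calc ‖hypergeometricTerm a b c x n‖
      = |(ascPochhammer ℝ n).eval a| / n.factorial * |x| ^ n * ratio := by
        rw [hypergeometricTerm_eq_mul, norm_mul, norm_mul, norm_div, norm_pow, Real.norm_natCast,
          norm_of_nonneg hratio_nonneg, norm_eq_abs, norm_eq_abs]
    _ ≤ (ascPochhammer ℝ n).eval |a| / n.factorial * |x| ^ n * 1 := by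
        have habs := abs_ascPochhammer_eval_le a n
        have := (abs_nonneg _).trans habs
        gcongr
    _ = (ascPochhammer ℝ n).eval |a| / n.factorial * |x| ^ n := mul_one _

lemma hasSum_betaIntegrand_mul_one_sub_mul_rpow (lam mu nu : ℝ) {b x : ℝ} (hb : |b| < 1)
    (hx : x ∈ Ioc (0:ℝ) 1) :
    HasSum (fun n : ℕ => (ascPochhammer ℝ n).eval nu / n.factorial * b ^ n *
        (x ^ (lam + n - 1) * (1 - x) ^ (mu - 1)))
      (x ^ (lam - 1) * (1 - x) ^ (mu - 1) * (1 - b * x) ^ (-nu)) := by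
  have hbx : |b * x| < 1 := by
    rw [abs_mul, abs_of_pos hx.1]
    exact (mul_le_of_le_one_right (abs_nonneg b) hx.2).trans_lt hb
  rw [mul_comm]
  refine ((hasSum_ascPochhammer_div_factorial_mul_pow nu hbx).mul_right _).congr_fun fun n => ?_
  rw [add_sub_right_comm, rpow_add hx.1, rpow_natCast]
  ring

lemma integral_betaIntegrand_mul_one_sub_mul_rpow {lam mu : ℝ} (nu : ℝ) {b : ℝ}
    (hlam : 0 < lam) (hmu : 0 < mu) (hb : |b| < 1) :
    ∫ x in (0:ℝ)..1, x ^ (lam - 1) * (1 - x) ^ (mu - 1) * (1 - b * x) ^ (-nu) =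
      betaIntegral lam mu * ∑' n, hypergeometricTerm nu lam (lam + mu) b n := by
  set F : ℕ → ℝ → ℝ := fun n x => (ascPochhammer ℝ n).eval nu / n.factorial * b ^ n *
    (x ^ (lam + n - 1) * (1 - x) ^ (mu - 1))
  have hratio : ∀ n : ℕ, 0 ≤ (ascPochhammer ℝ n).eval lam / (ascPochhammer ℝ n).eval (lam + mu) :=
    fun n => div_nonneg (ascPochhammer_pos n lam hlam).le
      (ascPochhammer_pos n (lam + mu) (by positivity)).le
  have hcoef : ∀ n : ℕ, (ascPochhammer ℝ n).eval nu / n.factorial * b ^ n *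
      betaIntegral (lam + n) mu = betaIntegral lam mu * hypergeometricTerm nu lam (lam + mu) b n :=
    fun n => by rw [betaIntegral_nat_add hlam hmu, hypergeometricTerm_eq_mul]; ring
  have hcoef_norm : ∀ n : ℕ, |(ascPochhammer ℝ n).eval nu / n.factorial * b ^ n| *
      betaIntegral (lam + n) mu =
        betaIntegral lam mu * ‖hypergeometricTerm nu lam (lam + mu) b n‖ :=
    fun n => by
      rw [betaIntegral_nat_add hlam hmu, hypergeometricTerm_eq_mul, norm_mul, norm_eq_abs,
        norm_of_nonneg (hratio n)]
      ring
  have hint : ∀ n, Integrable (F n) (volume.restrict (Ioc (0:ℝ) 1)) := fun n =>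
    ((intervalIntegrable_iff_integrableOn_Ioc_of_le zero_le_one).1
      (intervalIntegrable_betaIntegrand (by positivity) hmu)).const_mul _
  have hsum : Summable fun n => ∫ x in Ioc (0:ℝ) 1, ‖F n x‖ := by
    simp only [F, integral_norm_mul_betaIntegrand, hcoef_norm]
    exact (summable_norm_hypergeometricTerm nu hlam (by linarith) hb).mul_left _
  calc ∫ x in (0:ℝ)..1, x ^ (lam - 1) * (1 - x) ^ (mu - 1) * (1 - b * x) ^ (-nu)
      = ∫ x in Ioc (0:ℝ) 1, ∑' n, F n x := by
        rw [intervalIntegral.integral_of_le zero_le_one]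
        exact setIntegral_congr_fun measurableSet_Ioc fun x hx =>
          (hasSum_betaIntegrand_mul_one_sub_mul_rpow lam mu nu hb hx).tsum_eq.symm
    _ = ∑' n, ∫ x in Ioc (0:ℝ) 1, F n x := (integral_tsum_of_summable_integral_norm hint hsum).symm
    _ = ∑' n, betaIntegral lam mu * hypergeometricTerm nu lam (lam + mu) b n := by
        refine tsum_congr fun n => ?_
        rw [integral_const_mul, ← betaIntegral_eq_integral_Ioc, hcoef]
    _ = betaIntegral lam mu * ∑' n, hypergeometricTerm nu lam (lam + mu) b n := tsum_mul_left

/-- **Lemma 1 (Euler-type integral for the Gauss hypergeometric function).**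
For `λ > 0`, `μ > 0`, `ν ∈ ℝ` and `|β| < 1`,
`∫₀¹ x^{λ-1} (1-x)^{μ-1} (1-βx)^{-ν} dx = B(λ,μ) · ₂F₁(ν,λ;λ+μ;β)`,
where `B(λ,μ) = ∫₀¹ t^{λ-1}(1-t)^{μ-1} dt` and
`₂F₁(ν,λ;λ+μ;β) = ∑_{i=0}^∞ ((ν)_i (λ)_i / (λ+μ)_i) β^i / i!`
(with `(a)_i` the rising factorial), the series being convergent. -/
theorem rtuomg_lemma1 (lam mu nu b : ℝ) (hlam : 0 < lam) (hmu : 0 < mu)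
    (hb : |b| < 1) :
    Summable (fun i : ℕ =>
      ((ascPochhammer ℝ i).eval nu * (ascPochhammer ℝ i).eval lam /
        (ascPochhammer ℝ i).eval (lam + mu)) * b ^ i / (Nat.factorial i : ℝ)) ∧
    (∫ x in (0:ℝ)..1, x ^ (lam - 1) * (1 - x) ^ (mu - 1) * (1 - b * x) ^ (-nu)) =
      (∫ t in (0:ℝ)..1, t ^ (lam - 1) * (1 - t) ^ (mu - 1)) *
        ∑' i : ℕ,
          ((ascPochhammer ℝ i).eval nu * (ascPochhammer ℝ i).eval lam /
            (ascPochhammer ℝ i).eval (lam + mu)) * b ^ i / (Nat.factorial i : ℝ) :=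
  ⟨(summable_norm_hypergeometricTerm nu hlam (by linarith) hb).of_norm,
    integral_betaIntegrand_mul_one_sub_mul_rpow nu hlam hmu hb⟩
end

section
/- Let α > 0, β > 0, p ∈ [0,1], and x ∈ (0,1). Then the RTUOMG distribution function F is differentiable at x with derivative equal to the RTUOMG density f(x); that is, the map t ↦ 1 − ω(t) + p·ω(t)·log ω(t) has derivative (2αβ x^{β−1}/(1 − x^{2β}))·ω(x)·(1 − p − p·log ω(x)) at x. -/
/-- The omega function `ω(x) = ((1 + x^β)/(1 - x^β))^{-α}` on `(0,1)`. -/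
noncomputable def omegaFn (α β x : ℝ) : ℝ := ((1 + x ^ β) / (1 - x ^ β)) ^ (-α)

/-- The RTUOMG cumulative distribution function
`F(x) = 1 - ω(x) + p ω(x) log ω(x)`. -/
noncomputable def rtuomgCDF (α β p x : ℝ) : ℝ :=
  1 - omegaFn α β x + p * omegaFn α β x * Real.log (omegaFn α β x)

/-- The RTUOMG probability density function
`f(x) = (2αβ x^{β-1}/(1 - x^{2β})) ω(x) (1 - p - p log ω(x))`. -/
noncomputable def rtuomgPDF (α β p x : ℝ) : ℝ :=
  2 * α * β * x ^ (β - 1) / (1 - x ^ (2 * β)) * omegaFn α β x *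
    (1 - p - p * Real.log (omegaFn α β x))

open Real

/-! Since `t ↦ 1 - w + p w log w` has derivative `-w' (1 - p - p log w)`, it suffices to show
`ω' = -(2αβ x^{β-1}/(1 - x^{2β})) ω`. Writing `ω = g^{-α}` with `g = (1 + u)/(1 - u)` and `u = x^β`,
this is the chain rule together with `g'/g = 2u'/(1 - u²)`. -/

theorem HasDerivAt.one_add_div_one_sub_rpow {f : ℝ → ℝ} {f' x : ℝ} (a : ℝ)
    (hf : HasDerivAt f f' x) (hf1 : f x ≠ 1) (hf_neg1 : f x ≠ -1) :
    HasDerivAt (fun t => ((1 + f t) / (1 - f t)) ^ a)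
      (2 * a * f' / (1 - f x ^ 2) * ((1 + f x) / (1 - f x)) ^ a) x := by
  have hnum : 1 + f x ≠ 0 := fun h => hf_neg1 (by linarith)
  have hden : 1 - f x ≠ 0 := sub_ne_zero.mpr hf1.symm
  have hg : (1 + f x) / (1 - f x) ≠ 0 := div_ne_zero hnum hden
  refine (((hf.const_add 1).div (hf.const_sub 1) hden).rpow_const (Or.inl hg)).congr_deriv ?_
  rw [Pi.div_apply, rpow_sub_one hg, show 1 - f x ^ 2 = (1 - f x) * (1 + f x) by ring]
  field_simp
  ring

theorem HasDerivAt.one_sub_add_mul_mul_log {w : ℝ → ℝ} {w' x : ℝ} (p : ℝ)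
    (hw : HasDerivAt w w' x) (hx : w x ≠ 0) :
    HasDerivAt (fun t => 1 - w t + p * w t * Real.log (w t))
      (-w' * (1 - p - p * Real.log (w x))) x := by
  have hwlog : HasDerivAt (fun t => w t * Real.log (w t)) ((Real.log (w x) + 1) * w') x :=
    (hasDerivAt_mul_log hx).comp x hw
  simp only [mul_assoc]
  exact (((hasDerivAt_const x 1).sub hw).add (hwlog.const_mul p)).congr_deriv (by ring)

section omegaFn

variable (α : ℝ) {β x : ℝ}

theorem omegaFn_pos (hβ : 0 < β) (hx : x ∈ Set.Ioo (0 : ℝ) 1) : 0 < omegaFn α β x := by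
  have hu0 : 0 < x ^ β := rpow_pos_of_pos hx.1 β
  have hu1 : x ^ β < 1 := rpow_lt_one hx.1.le hx.2 hβ
  exact rpow_pos_of_pos (div_pos (by linarith) (by linarith)) _

theorem hasDerivAt_omegaFn (hβ : 0 < β) (hx : x ∈ Set.Ioo (0 : ℝ) 1) :
    HasDerivAt (omegaFn α β)
      (-(2 * α * β * x ^ (β - 1) / (1 - x ^ (2 * β)) * omegaFn α β x)) x := by
  have hu0 : 0 < x ^ β := rpow_pos_of_pos hx.1 β
  have hu1 : x ^ β < 1 := rpow_lt_one hx.1.le hx.2 hβ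
  have hu : HasDerivAt (fun t => t ^ β) (β * x ^ (β - 1)) x :=
    hasDerivAt_rpow_const (Or.inl hx.1.ne')
  refine (hu.one_add_div_one_sub_rpow (-α) hu1.ne (by linarith)).congr_deriv ?_
  have hx2β : x ^ (2 * β) = (x ^ β) ^ 2 := by rw [mul_comm, rpow_mul hx.1.le, rpow_two]
  rw [hx2β, omegaFn]
  ring

end omegaFn

theorem rtuomg_hasDerivAt_cdf_general (α β p x : ℝ) (hβ : 0 < β) (hx : x ∈ Set.Ioo (0:ℝ) 1) :
    HasDerivAt (fun t => rtuomgCDF α β p t) (rtuomgPDF α β p x) x := by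
  have h := (hasDerivAt_omegaFn α hβ hx).one_sub_add_mul_mul_log p (omegaFn_pos α hβ hx).ne'
  rwa [neg_neg] at h

/-- **The RTUOMG distribution function has the RTUOMG density as derivative.**
For `α > 0`, `β > 0`, `p ∈ [0,1]` and `x ∈ (0,1)`, the map
`t ↦ 1 - ω(t) + p ω(t) log ω(t)` is differentiable at `x` with derivative
`(2αβ x^{β-1}/(1-x^{2β})) ω(x) (1 - p - p log ω(x))`. -/
theorem rtuomg_hasDerivAt_cdf (α β p x : ℝ) (hα : 0 < α) (hβ : 0 < β)
    (hp : p ∈ Set.Icc (0:ℝ) 1) (hx : x ∈ Set.Ioo (0:ℝ) 1) :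
    HasDerivAt (fun t => rtuomgCDF α β p t) (rtuomgPDF α β p x) x :=
  rtuomg_hasDerivAt_cdf_general α β p x hβ hx
end

section
/- For all α > 0, β > 0 and p ∈ [0,1], the RTUOMG distribution function F(x) = 1 − ω(x) + p·ω(x)·log ω(x) is strictly increasing on the open interval (0,1). -/
/-!
`F = g ∘ ω` with `g t = 1 - t + p t log t`. On `[0,1]`, `g' t = p log t - (1 - p) < 0`, so `g` is
strictly decreasing; and `ω` maps `(0,1)` into itself, strictly decreasingly, being the
composite of the increasing maps `x ↦ x^β`, `y ↦ (1 + y)/(1 - y)` with the decreasing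
`u ↦ u^{-α}`.
-/

open Set Real

theorem strictAntiOn_one_sub_add_mul_mul_log {p : ℝ} (hp₀ : 0 ≤ p) (hp₁ : p ≤ 1) :
    StrictAntiOn (fun t : ℝ => 1 - t + p * t * log t) (Icc 0 1) := by
  simp only [mul_assoc]
  have hcont : Continuous fun t : ℝ => 1 - t + p * (t * log t) :=
    (continuous_const.sub continuous_id').add (continuous_const.mul continuous_mul_log)
  refine strictAntiOn_of_deriv_neg (convex_Icc 0 1) hcont.continuousOn fun t ht => ?_
  rw [interior_Icc] at ht
  have hderiv : HasDerivAt (fun t : ℝ => 1 - t + p * (t * log t)) (p * log t - (1 - p)) t :=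
    (((hasDerivAt_id' t).const_sub 1).add ((hasDerivAt_mul_log ht.1.ne').const_mul p)).congr_deriv
      (by ring)
  have hlog : log t < 0 := log_neg ht.1 ht.2
  rw [hderiv.deriv]
  rcases hp₁.lt_or_eq with hp | rfl
  · linarith [mul_nonpos_of_nonneg_of_nonpos hp₀ hlog.le]
  · linarith

theorem strictMonoOn_one_add_div_one_sub :
    StrictMonoOn (fun y : ℝ => (1 + y) / (1 - y)) (Iio 1) := by
  intro x hx y hy hxy
  simp only [mem_Iio] at hx hy
  rw [div_lt_div_iff₀ (by linarith) (by linarith)]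
  nlinarith

theorem one_lt_one_add_div_one_sub {y : ℝ} (hy₀ : 0 < y) (hy₁ : y < 1) :
    1 < (1 + y) / (1 - y) := by
  rw [one_lt_div (by linarith)]
  linarith

theorem rpow_mem_Ioo_zero_one {x β : ℝ} (hx : x ∈ Ioo (0 : ℝ) 1) (hβ : 0 < β) :
    x ^ β ∈ Ioo (0 : ℝ) 1 :=
  ⟨rpow_pos_of_pos hx.1 β, rpow_lt_one hx.1.le hx.2 hβ⟩

section omegaFn

variable {α β : ℝ}

theorem one_lt_one_add_rpow_div_one_sub_rpow (hβ : 0 < β) {x : ℝ} (hx : x ∈ Ioo (0 : ℝ) 1) :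
    1 < (1 + x ^ β) / (1 - x ^ β) :=
  one_lt_one_add_div_one_sub (rpow_mem_Ioo_zero_one hx hβ).1 (rpow_mem_Ioo_zero_one hx hβ).2

theorem mapsTo_omegaFn (hα : 0 < α) (hβ : 0 < β) : MapsTo (omegaFn α β) (Ioo 0 1) (Ioo 0 1) :=
  fun _ hx =>
    have hu := one_lt_one_add_rpow_div_one_sub_rpow hβ hx
    ⟨rpow_pos_of_pos (zero_lt_one.trans hu) _,
      rpow_lt_one_of_one_lt_of_neg hu (neg_neg_of_pos hα)⟩

theorem strictAntiOn_omegaFn (hα : 0 < α) (hβ : 0 < β) :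
    StrictAntiOn (omegaFn α β) (Ioo 0 1) := by
  intro x hx y hy hxy
  have hxβ := rpow_mem_Ioo_zero_one hx hβ
  have hyβ := rpow_mem_Ioo_zero_one hy hβ
  exact rpow_lt_rpow_of_neg (zero_lt_one.trans (one_lt_one_add_rpow_div_one_sub_rpow hβ hx))
    (strictMonoOn_one_add_div_one_sub hxβ.2 hyβ.2 (rpow_lt_rpow hx.1.le hxy hβ))
    (neg_neg_of_pos hα)

end omegaFn

/-- **The RTUOMG distribution function is strictly increasing on `(0,1)`.**
For all `α > 0`, `β > 0` and `p ∈ [0,1]`, the map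
`x ↦ 1 - ω(x) + p ω(x) log ω(x)` is strictly increasing on `(0,1)`. -/
theorem rtuomg_cdf_strictMonoOn (α β p : ℝ) (hα : 0 < α) (hβ : 0 < β)
    (hp : p ∈ Set.Icc (0:ℝ) 1) :
    StrictMonoOn (fun x => rtuomgCDF α β p x) (Set.Ioo (0:ℝ) 1) :=
  (strictAntiOn_one_sub_add_mul_mul_log hp.1 hp.2).comp (strictAntiOn_omegaFn hα hβ)
    ((mapsTo_omegaFn hα hβ).mono_right Set.Ioo_subset_Icc_self)
end

section
/- Let α > 0, β > 0, p ∈ [0,1] and r > 0. Then the r-th moment of the RTUOMG distribution satisfies ∫₀¹ x^r f(x) dx = 2α(1−p)·∫₀¹ y^{r/β} (1−y)^{α−1} (1+y)^{−(α+1)} dy + 4pα²·∑_{k=1}^∞ (1/(2k−1))·∫₀¹ y^{r/β+2k−1} (1−y)^{α−1} (1+y)^{−(α+1)} dy, where the series on the right converges. -/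
open MeasureTheory Real Set

theorem hasSum_integral_of_nonneg {X ι : Type*} [MeasurableSpace X] [Countable ι]
    {μ : Measure X} {F : ι → X → ℝ} {f : X → ℝ} (hF_meas : ∀ i, AEStronglyMeasurable (F i) μ)
    (hF_nonneg : ∀ i, 0 ≤ᵐ[μ] F i) (hf : Integrable f μ)
    (h_lim : ∀ᵐ x ∂μ, HasSum (fun i => F i x) (f x)) :
    HasSum (fun i => ∫ x, F i x ∂μ) (∫ x, f x ∂μ) := by
  refine hasSum_integral_of_dominated_convergence F hF_meas (fun i => ?_) ?_ ?_ h_lim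
  · filter_upwards [hF_nonneg i] with x hx using (Real.norm_of_nonneg hx).le
  · filter_upwards [h_lim] with x hx using hx.summable
  · exact hf.congr (by filter_upwards [h_lim] with x hx using hx.tsum_eq.symm)

theorem integrableOn_one_sub_rpow_Ioo {s : ℝ} (hs : -1 < s) :
    IntegrableOn (fun y : ℝ => (1 - y) ^ s) (Ioo 0 1) := by
  have h := (intervalIntegral.intervalIntegrable_rpow' (a := 1) (b := 0) hs).comp_sub_left 1
  rw [sub_self, sub_zero] at h
  exact (intervalIntegrable_iff_integrableOn_Ioo_of_le zero_le_one).mp h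

theorem setIntegral_Ioo_zero_one_comp_rpow {β : ℝ} (hβ : 0 < β) (g : ℝ → ℝ) :
    ∫ x in Ioo (0 : ℝ) 1, β * x ^ (β - 1) * g (x ^ β) = ∫ y in Ioo (0 : ℝ) 1, g y := by
  have himage : (fun x : ℝ => x ^ β) '' Ioo 0 1 = Ioo 0 1 := by
    ext y
    refine ⟨?_, fun hy => ⟨y ^ β⁻¹, ?_, ?_⟩⟩
    · rintro ⟨x, hx, rfl⟩
      exact ⟨rpow_pos_of_pos hx.1 _, rpow_lt_one hx.1.le hx.2 hβ⟩
    · exact ⟨rpow_pos_of_pos hy.1 _, rpow_lt_one hy.1.le hy.2 (inv_pos.mpr hβ)⟩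
    · exact rpow_inv_rpow hy.1.le hβ.ne'
  have hinj : InjOn (fun x : ℝ => x ^ β) (Ioo 0 1) :=
    (rpow_left_injOn hβ.ne').mono fun x hx => hx.1.le
  have h := integral_image_eq_integral_abs_deriv_smul measurableSet_Ioo
    (fun x hx => (hasDerivAt_rpow_const (Or.inl hx.1.ne')).hasDerivWithinAt) hinj g
  rw [himage] at h
  rw [h]
  refine setIntegral_congr_fun measurableSet_Ioo fun x hx => ?_
  rw [smul_eq_mul, abs_of_pos (by have := hx.1; positivity)]

noncomputable def momentKernel (α c y : ℝ) : ℝ :=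
  y ^ c * (1 - y) ^ (α - 1) * (1 + y) ^ (-(α + 1))

section momentKernel

variable {α c y : ℝ}

theorem measurable_momentKernel : Measurable (momentKernel α c) := by
  unfold momentKernel; fun_prop

theorem momentKernel_nonneg (hy : y ∈ Ioo 0 1) : 0 ≤ momentKernel α c y := by
  have : 0 < y := hy.1
  have : 0 < 1 - y := sub_pos.mpr hy.2
  have : 0 < 1 + y := by linarith
  unfold momentKernel
  positivity

theorem momentKernel_le (hα : -1 ≤ α) (hc : 0 ≤ c) (hy : y ∈ Ioo 0 1) :
    momentKernel α c y ≤ (1 - y) ^ (α - 1) := by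
  have hyc : y ^ c ≤ 1 := rpow_le_one hy.1.le hy.2.le hc
  have hplus : (1 + y) ^ (-(α + 1)) ≤ 1 :=
    rpow_le_one_of_one_le_of_nonpos (by linarith [hy.1]) (by linarith)
  have : 0 ≤ y := hy.1.le
  have : 0 ≤ 1 - y := (sub_pos.mpr hy.2).le
  have : 0 ≤ 1 + y := by linarith
  calc momentKernel α c y ≤ 1 * (1 - y) ^ (α - 1) * 1 := by
        unfold momentKernel; gcongr
    _ = (1 - y) ^ (α - 1) := by ring

theorem integrableOn_momentKernel (hα : 0 < α) (hc : 0 ≤ c) :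
    IntegrableOn (momentKernel α c) (Ioo 0 1) := by
  refine (integrableOn_one_sub_rpow_Ioo (s := α - 1) (by linarith)).mono'
    measurable_momentKernel.aestronglyMeasurable ?_
  filter_upwards [ae_restrict_mem measurableSet_Ioo] with y hy
  rw [Real.norm_of_nonneg (momentKernel_nonneg hy)]
  exact momentKernel_le (by linarith) hc hy

theorem momentKernel_eq_rpow_mul (α c y : ℝ) : momentKernel α c y = y ^ c * momentKernel α 0 y := by
  simp only [momentKernel, rpow_zero, one_mul, mul_assoc]

theorem momentKernel_zero_mul (hy : y ∈ Ioo 0 1) :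
    momentKernel α 0 y * ((1 - y) * (1 + y)) = (1 - y) ^ α * (1 + y) ^ (-α) := by
  have h1y : 1 - y ≠ 0 := (sub_pos.mpr hy.2).ne'
  have h1y' : 1 + y ≠ 0 := by linarith [hy.1]
  rw [momentKernel, rpow_zero, one_mul, rpow_sub_one h1y, show -(α + 1) = -α - 1 by ring,
    rpow_sub_one h1y']
  field_simp

theorem log_one_add_sub_log_one_sub_nonneg (hy : y ∈ Ioo 0 1) :
    0 ≤ log (1 + y) - log (1 - y) := by
  have h1 : log (1 - y) ≤ 0 := log_nonpos (by linarith [hy.2]) (by linarith [hy.1])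
  have h2 : 0 ≤ log (1 + y) := log_nonneg (by linarith [hy.1])
  linarith

theorem log_one_add_sub_log_one_sub_le {ε : ℝ} (hε : 0 < ε) (hy : y ∈ Ioo 0 1) :
    log (1 + y) - log (1 - y) ≤ 1 + (1 - y) ^ (-ε) / ε := by
  have h1y : 0 < 1 - y := sub_pos.mpr hy.2
  have hplus : log (1 + y) ≤ 1 := by
    linarith [log_le_sub_one_of_pos (show 0 < 1 + y by linarith [hy.1]), hy.2]
  have hminus : -log (1 - y) ≤ (1 - y) ^ (-ε) / ε := by
    rw [← log_inv, rpow_neg h1y.le, ← inv_rpow h1y.le]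
    exact log_le_rpow_div (inv_nonneg.mpr h1y.le) hε
  linarith

theorem integrableOn_momentKernel_mul_log (hα : 0 < α) (hc : 0 ≤ c) :
    IntegrableOn (fun y => momentKernel α c y * (log (1 + y) - log (1 - y))) (Ioo 0 1) := by
  have hdom : IntegrableOn (fun y : ℝ => (1 - y) ^ (α - 1) + (1 - y) ^ (α / 2 - 1) / (α / 2))
      (Ioo 0 1) :=
    (integrableOn_one_sub_rpow_Ioo (by linarith)).add
      ((integrableOn_one_sub_rpow_Ioo (by linarith)).div_const _)
  refine hdom.mono' (measurable_momentKernel.mul (by fun_prop)).aestronglyMeasurable ?_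
  filter_upwards [ae_restrict_mem measurableSet_Ioo] with y hy
  have h1y : 0 < 1 - y := sub_pos.mpr hy.2
  rw [norm_of_nonneg (mul_nonneg (momentKernel_nonneg hy) (log_one_add_sub_log_one_sub_nonneg hy))]
  calc momentKernel α c y * (log (1 + y) - log (1 - y))
      ≤ (1 - y) ^ (α - 1) * (1 + (1 - y) ^ (-(α / 2)) / (α / 2)) :=
        mul_le_mul (momentKernel_le (by linarith) hc hy)
          (log_one_add_sub_log_one_sub_le (by positivity) hy)
          (log_one_add_sub_log_one_sub_nonneg hy) (rpow_nonneg h1y.le _)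
    _ = (1 - y) ^ (α - 1) + (1 - y) ^ (α / 2 - 1) / (α / 2) := by
        rw [mul_add, mul_one, ← mul_div_assoc, ← rpow_add h1y]
        ring_nf

theorem hasSum_momentKernel_mul_log (hy : y ∈ Ioo 0 1) :
    HasSum (fun k : ℕ => 1 / (2 * ((k : ℝ) + 1) - 1) *
        momentKernel α (c + 2 * ((k : ℝ) + 1) - 1) y)
      (momentKernel α c y * (log (1 + y) - log (1 - y)) / 2) := by
  have h := (hasSum_log_sub_log_of_abs_lt_one (abs_lt.mpr ⟨by linarith [hy.1], hy.2⟩)).mul_left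
    (momentKernel α c y / 2)
  rw [mul_div_right_comm]
  refine h.congr_fun fun k => ?_
  have hexp : c + 2 * ((k : ℝ) + 1) - 1 = c + ((2 * k + 1 : ℕ) : ℝ) := by push_cast; ring
  rw [momentKernel, momentKernel, hexp, rpow_add hy.1, rpow_natCast]
  ring

theorem hasSum_integral_momentKernel_mul_log (hα : 0 < α) (hc : 0 ≤ c) :
    HasSum (fun k : ℕ => 1 / (2 * ((k : ℝ) + 1) - 1) *
        ∫ y in (0 : ℝ)..1, momentKernel α (c + 2 * ((k : ℝ) + 1) - 1) y)
      ((∫ y in (0 : ℝ)..1, momentKernel α c y * (log (1 + y) - log (1 - y))) / 2) := by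
  simp only [intervalIntegral.integral_of_le zero_le_one, integral_Ioc_eq_integral_Ioo,
    ← integral_const_mul, ← integral_div]
  refine hasSum_integral_of_nonneg
    (fun k => (measurable_momentKernel.const_mul _).aestronglyMeasurable) (fun k => ?_)
    ((integrableOn_momentKernel_mul_log hα hc).div_const 2) ?_
  · filter_upwards [ae_restrict_mem measurableSet_Ioo] with y hy
    exact mul_nonneg (one_div_nonneg.mpr (by linarith [(Nat.cast_nonneg k : (0 : ℝ) ≤ k)]))
      (momentKernel_nonneg hy)
  · filter_upwards [ae_restrict_mem measurableSet_Ioo] with y hy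
      using hasSum_momentKernel_mul_log hy

end momentKernel

theorem rtuomgPDF_eq {α β : ℝ} (p : ℝ) (hβ : 0 < β) {x : ℝ} (hx : x ∈ Ioo 0 1) :
    rtuomgPDF α β p x = β * x ^ (β - 1) *
      (2 * α * momentKernel α 0 (x ^ β) *
        (1 - p + p * α * (log (1 + x ^ β) - log (1 - x ^ β)))) := by
  have hy : x ^ β ∈ Ioo 0 1 := ⟨rpow_pos_of_pos hx.1 _, rpow_lt_one hx.1.le hx.2 hβ⟩
  have h1y : 0 < 1 - x ^ β := sub_pos.mpr hy.2
  have h1y' : 0 < 1 + x ^ β := by linarith [hy.1]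
  have hsq : x ^ (2 * β) = (x ^ β) ^ 2 := by
    rw [mul_comm, rpow_mul hx.1.le, rpow_two]
  have hω : omegaFn α β x = momentKernel α 0 (x ^ β) * ((1 - x ^ β) * (1 + x ^ β)) := by
    rw [momentKernel_zero_mul hy, omegaFn, div_rpow h1y'.le h1y.le, rpow_neg h1y'.le,
      rpow_neg h1y.le]
    field_simp
  have hlogω : log (omegaFn α β x) = -α * (log (1 + x ^ β) - log (1 - x ^ β)) := by
    rw [omegaFn, log_rpow (div_pos h1y' h1y), log_div h1y'.ne' h1y.ne']
  rw [rtuomgPDF, hlogω, hω, hsq]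
  field_simp [show 1 - (x ^ β) ^ 2 = (1 - x ^ β) * (1 + x ^ β) by ring]
  ring

theorem integral_rpow_mul_rtuomgPDF {α β r : ℝ} (p : ℝ) (hα : 0 < α) (hβ : 0 < β)
    (hr : 0 ≤ r) :
    ∫ x in (0 : ℝ)..1, x ^ r * rtuomgPDF α β p x =
      2 * α * (1 - p) * (∫ y in (0 : ℝ)..1, momentKernel α (r / β) y) +
      2 * p * α ^ 2 *
        ∫ y in (0 : ℝ)..1, momentKernel α (r / β) y * (log (1 + y) - log (1 - y)) := by
  have hc : 0 ≤ r / β := by positivity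
  simp only [intervalIntegral.integral_of_le zero_le_one, integral_Ioc_eq_integral_Ioo]
  -- the substitution `y = x ^ β` must rewrite the right-hand side
  symm
  rw [← integral_const_mul, ← integral_const_mul,
    ← integral_add ((integrableOn_momentKernel hα hc).const_mul _)
      ((integrableOn_momentKernel_mul_log hα hc).const_mul _),
    ← setIntegral_Ioo_zero_one_comp_rpow hβ]
  refine setIntegral_congr_fun measurableSet_Ioo fun x hx => ?_
  rw [rtuomgPDF_eq p hβ hx, momentKernel_eq_rpow_mul _ (r / β), ← rpow_mul hx.1.le,
    mul_div_cancel₀ _ hβ.ne']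
  ring

theorem rtuomg_moment_general (α β p r : ℝ) (hα : 0 < α) (hβ : 0 < β)
    (hr : 0 < r) :
    Summable (fun k : ℕ => (1 / (2 * ((k : ℝ) + 1) - 1)) *
      ∫ y in (0:ℝ)..1,
        y ^ (r / β + 2 * ((k : ℝ) + 1) - 1) * (1 - y) ^ (α - 1) *
          (1 + y) ^ (-(α + 1))) ∧
    (∫ x in (0:ℝ)..1, x ^ r * rtuomgPDF α β p x) =
      2 * α * (1 - p) *
        (∫ y in (0:ℝ)..1,
          y ^ (r / β) * (1 - y) ^ (α - 1) * (1 + y) ^ (-(α + 1))) +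
      4 * p * α ^ 2 *
        ∑' k : ℕ, (1 / (2 * ((k : ℝ) + 1) - 1)) *
          ∫ y in (0:ℝ)..1,
            y ^ (r / β + 2 * ((k : ℝ) + 1) - 1) * (1 - y) ^ (α - 1) *
              (1 + y) ^ (-(α + 1)) := by
  have hseries := hasSum_integral_momentKernel_mul_log (c := r / β) hα (by positivity)
  have hmoment := integral_rpow_mul_rtuomgPDF p hα hβ hr.le
  unfold momentKernel at hseries hmoment
  refine ⟨hseries.summable, ?_⟩
  rw [hmoment, hseries.tsum_eq]
  ring

/-- **Moments of the RTUOMG distribution (Proposition 1, integral form).**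
For `α > 0`, `β > 0`, `p ∈ [0,1]` and `r > 0`,
`∫₀¹ x^r f(x) dx = 2α(1-p) ∫₀¹ y^{r/β} (1-y)^{α-1} (1+y)^{-(α+1)} dy
  + 4pα² ∑_{k=1}^∞ (1/(2k-1)) ∫₀¹ y^{r/β+2k-1} (1-y)^{α-1} (1+y)^{-(α+1)} dy`,
the series on the right being convergent. -/
theorem rtuomg_moment (α β p r : ℝ) (hα : 0 < α) (hβ : 0 < β)
    (hp : p ∈ Set.Icc (0:ℝ) 1) (hr : 0 < r) :
    Summable (fun k : ℕ => (1 / (2 * ((k : ℝ) + 1) - 1)) *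
      ∫ y in (0:ℝ)..1,
        y ^ (r / β + 2 * ((k : ℝ) + 1) - 1) * (1 - y) ^ (α - 1) *
          (1 + y) ^ (-(α + 1))) ∧
    (∫ x in (0:ℝ)..1, x ^ r * rtuomgPDF α β p x) =
      2 * α * (1 - p) *
        (∫ y in (0:ℝ)..1,
          y ^ (r / β) * (1 - y) ^ (α - 1) * (1 + y) ^ (-(α + 1))) +
      4 * p * α ^ 2 *
        ∑' k : ℕ, (1 / (2 * ((k : ℝ) + 1) - 1)) *
          ∫ y in (0:ℝ)..1,
            y ^ (r / β + 2 * ((k : ℝ) + 1) - 1) * (1 - y) ^ (α - 1) *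
              (1 + y) ^ (-(α + 1)) :=
  rtuomg_moment_general α β p r hα hβ hr
end

section
/- Let β > 0, p ∈ [0,1] and 0 < α₂ ≤ α₁. Then for every x ∈ (0,1), the RTUOMG distribution functions satisfy F(x; α₂, β, p) ≤ F(x; α₁, β, p); equivalently, the RTUOMG distribution with the larger shape parameter α₁ is stochastically smaller than the one with α₂ (the RTUOMG distribution function is nondecreasing in α). -/
open Real Set

theorem antitoneOn_exp_neg_mul_one_add_mul {p : ℝ} (hp : p ∈ Icc (0 : ℝ) 1) :
    AntitoneOn (fun s ↦ exp (-s) * (1 + p * s)) (Ici 0) := by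
  have hderiv (s : ℝ) : HasDerivAt (fun s ↦ exp (-s) * (1 + p * s))
      (exp (-s) * (p - 1 - p * s)) s := by
    refine (((hasDerivAt_neg s).exp).mul
      (((hasDerivAt_id s).const_mul p).const_add 1)).congr_deriv ?_
    simp only [id]
    ring
  refine antitoneOn_of_deriv_nonpos (convex_Ici 0) (by fun_prop)
    (fun s _ ↦ (hderiv s).differentiableAt.differentiableWithinAt) fun s hs ↦ ?_
  rw [interior_Ici, mem_Ioi] at hs
  rw [(hderiv s).deriv]
  exact mul_nonpos_of_nonneg_of_nonpos (exp_pos _).le (by nlinarith [hp.1, hp.2])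

theorem one_lt_one_add_div_one_sub_s16 {u : ℝ} (hu : u ∈ Ioo (0 : ℝ) 1) :
    1 < (1 + u) / (1 - u) := by
  rw [one_lt_div (by linarith [hu.2])]
  linarith [hu.1]

theorem rtuomgCDF_eq_one_sub_exp {α β p x : ℝ} (hpos : 0 < (1 + x ^ β) / (1 - x ^ β)) :
    rtuomgCDF α β p x = 1 - exp (-(α * log ((1 + x ^ β) / (1 - x ^ β)))) *
      (1 + p * (α * log ((1 + x ^ β) / (1 - x ^ β)))) := by
  have hω : omegaFn α β x = exp (-(α * log ((1 + x ^ β) / (1 - x ^ β)))) := by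
    rw [omegaFn, rpow_def_of_pos hpos]
    ring_nf
  rw [rtuomgCDF, hω, log_exp]
  ring

/-- **Stochastic ordering in the shape parameter `α`.**
For `β > 0`, `p ∈ [0,1]` and `0 < α₂ ≤ α₁`, the RTUOMG distribution functions
satisfy `F(x; α₂, β, p) ≤ F(x; α₁, β, p)` for every `x ∈ (0,1)`; i.e. the
RTUOMG distribution with the larger shape parameter is stochastically smaller. -/
theorem rtuomg_stochastic_order (β p α₁ α₂ : ℝ) (hβ : 0 < β)
    (hp : p ∈ Set.Icc (0:ℝ) 1) (hα₂ : 0 < α₂) (hα : α₂ ≤ α₁) :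
    ∀ x ∈ Set.Ioo (0:ℝ) 1, rtuomgCDF α₂ β p x ≤ rtuomgCDF α₁ β p x := by
  intro x ⟨hx0, hx1⟩
  have ht : 1 < (1 + x ^ β) / (1 - x ^ β) :=
    one_lt_one_add_div_one_sub_s16 ⟨rpow_pos_of_pos hx0 β, rpow_lt_one hx0.le hx1 hβ⟩
  have hL := (log_pos ht).le
  rw [rtuomgCDF_eq_one_sub_exp (one_pos.trans ht), rtuomgCDF_eq_one_sub_exp (one_pos.trans ht)]
  gcongr 1 - ?_
  exact antitoneOn_exp_neg_mul_one_add_mul hp (mem_Ici.2 (by positivity))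
    (mem_Ici.2 (mul_nonneg (hα₂.le.trans hα) hL)) (mul_le_mul_of_nonneg_right hα hL)
end
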